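/- arXiv:2007.13396 — 7 statements merged into one kernel-verified Lean document; each statement's English description precedes it below -/
import Mathlib

section
/- If B is a nilpotent n×n complex matrix, the number of Jordan blocks of B (at eigenvalue 0) is not divisible by m, and every Jordan block of B has size at least 2, then there is no matrix A with A^m = B. -/
open Matrix

def jordanBlock (n : ℕ) (lam : ℂ) : Matrix (Fin n) (Fin n) ℂ :=
  fun i j => if (i : ℕ) = (j : ℕ) then lam else if (i : ℕ) + 1 = (j : ℕ) then 1 else 0

def backQ (n : ℕ) : Matrix (Fin n) (Fin n) ℂ :=
  fun i j => if (i : ℕ) + (j : ℕ) + 1 = n then 1 else 0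

def dsum {n : ℕ} (A B : Matrix (Fin n) (Fin n) ℂ) :
    Matrix (Fin (n + n)) (Fin (n + n)) ℂ :=
  Matrix.reindex finSumFinEquiv finSumFinEquiv (Matrix.fromBlocks A 0 0 B)

/-- `Dk f j = dim (ker f ⊓ range f^j)`. -/
noncomputable def Dk {n : ℕ} (f : Module.End ℂ (Fin n → ℂ)) (j : ℕ) : ℕ :=
  Module.finrank ℂ (LinearMap.ker f ⊓ LinearMap.range (f ^ j) : Submodule ℂ (Fin n → ℂ))

lemma Dk_anti {n : ℕ} (f : Module.End ℂ (Fin n → ℂ)) {j k : ℕ} (hjk : j ≤ k) :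
    Dk f k ≤ Dk f j := by
  apply Submodule.finrank_mono
  apply inf_le_inf_left
  obtain ⟨t, rfl⟩ := Nat.exists_eq_add_of_le hjk
  rw [pow_add]
  exact LinearMap.range_comp_le_range _ _

/-- rank-nullity step: `rank f^k = rank f^(k+1) + Dk f k` -/
lemma rank_pow_step {n : ℕ} (f : Module.End ℂ (Fin n → ℂ)) (k : ℕ) :
    Module.finrank ℂ (LinearMap.range (f ^ k)) =
      Module.finrank ℂ (LinearMap.range (f ^ (k + 1))) + Dk f k := by
  set p := LinearMap.range (f ^ k)
  have h := LinearMap.finrank_range_add_finrank_ker (f.domRestrict p)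
  have hr : LinearMap.range (f.domRestrict p) = LinearMap.range (f ^ (k + 1)) := by
    rw [LinearMap.range_domRestrict, pow_succ', Module.End.mul_eq_comp, LinearMap.range_comp]
  have hk : Module.finrank ℂ (LinearMap.ker (f.domRestrict p)) = Dk f k := by
    rw [LinearMap.ker_domRestrict]
    have hmap : ((LinearMap.ker f).comap p.subtype).map p.subtype = p ⊓ LinearMap.ker f :=
      Submodule.map_comap_subtype p (LinearMap.ker f)
    rw [Dk, inf_comm]
    calc Module.finrank ℂ ((LinearMap.ker f).comap p.subtype) =
        Module.finrank ℂ (((LinearMap.ker f).comap p.subtype).map p.subtype) :=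
          (Submodule.equivMapOfInjective p.subtype p.injective_subtype _).finrank_eq
      _ = Module.finrank ℂ (p ⊓ LinearMap.ker f : Submodule ℂ (Fin n → ℂ)) := by rw [hmap]
  rw [← hr, ← hk]
  omega

lemma rank_pow_telescope {n : ℕ} (f : Module.End ℂ (Fin n → ℂ)) (a t : ℕ) :
    Module.finrank ℂ (LinearMap.range (f ^ a)) =
      Module.finrank ℂ (LinearMap.range (f ^ (a + t))) +
        ∑ j ∈ Finset.range t, Dk f (a + j) := by
  induction t with
  | zero => simp
  | succ t ih =>
    have hs := rank_pow_step f (a + t)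
    rw [Finset.sum_range_succ, show a + (t + 1) = (a + t) + 1 by omega]
    omega

theorem no_mth_root_of_nilpotent {n : ℕ} (m : ℕ) (hm : 2 ≤ m)
    (B : Matrix (Fin n) (Fin n) ℂ) (hnil : IsNilpotent B)
    (hdvd : ¬ (m ∣ (n - B.rank)))
    (hno1 : n - B.rank = B.rank - (B * B).rank) :
    ¬ ∃ A : Matrix (Fin n) (Fin n) ℂ, A ^ m = B := by
  rintro ⟨A, rfl⟩
  set f : Module.End ℂ (Fin n → ℂ) := A.mulVecLin with hf
  have hpow : ∀ k : ℕ, (A ^ k).mulVecLin = f ^ k := by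
    intro k
    induction k with
    | zero => simp [hf, Module.End.one_eq_id]
    | succ k ih => rw [pow_succ, pow_succ, Matrix.mulVecLin_mul, ih]; rfl
  have hrank : ∀ k : ℕ, (A ^ k).rank = Module.finrank ℂ (LinearMap.range (f ^ k)) := by
    intro k; rw [Matrix.rank, hpow]
  have hr0 : Module.finrank ℂ (LinearMap.range (f ^ 0)) = n := by
    rw [pow_zero, Module.End.one_eq_id, LinearMap.range_id, finrank_top]
    simp [Module.finrank_fintype_fun_eq_card]
  have h1 := rank_pow_telescope f 0 m
  have h2 := rank_pow_telescope f m m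
  rw [Nat.zero_add] at h1
  simp only [Nat.zero_add] at h1
  have hBrank : (A ^ m).rank = Module.finrank ℂ (LinearMap.range (f ^ m)) := hrank m
  have hB2 : (A ^ m * A ^ m).rank = Module.finrank ℂ (LinearMap.range (f ^ (m + m))) := by
    rw [← pow_add]; exact hrank (m + m)
  have hS1 : n - (A ^ m).rank = ∑ j ∈ Finset.range m, Dk f j := by omega
  have hS2 : (A ^ m).rank - (A ^ m * A ^ m).rank = ∑ j ∈ Finset.range m, Dk f (m + j) := by
    omega
  have hsum : ∑ j ∈ Finset.range m, Dk f (m + j) = ∑ j ∈ Finset.range m, Dk f j := by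
    omega
  have hterm : ∀ j ∈ Finset.range m, Dk f (m + j) = Dk f j :=
    (Finset.sum_eq_sum_iff_of_le
      (fun j _ => Dk_anti f (Nat.le_add_left j m))).mp hsum
  have hd0 : ∀ j ∈ Finset.range m, Dk f j = Dk f 0 := by
    intro j hj
    have h1' : Dk f j ≤ Dk f 0 := Dk_anti f (Nat.zero_le j)
    have h2' : Dk f m ≤ Dk f j := Dk_anti f (Nat.le_of_lt (Finset.mem_range.mp hj))
    have h3' : Dk f (m + 0) = Dk f 0 := hterm 0 (Finset.mem_range.mpr (by omega))
    simp only [Nat.add_zero] at h3'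
    omega
  have hfin : ∑ j ∈ Finset.range m, Dk f j = m * Dk f 0 := by
    rw [Finset.sum_congr rfl hd0, Finset.sum_const, Finset.card_range, smul_eq_mul]
  exact hdvd ⟨Dk f 0, by omega⟩
end

section
/- Let T be an n×n upper-triangular complex Toeplitz matrix with real diagonal λ and nonzero superdiagonal entry t₂, and B = T ⊕ conj(T). Then there exists an invertible 2n×2n matrix S such that S⁻¹BS = J_n(λ) ⊕ J_n(λ) and S* Q_{2n} S = Q_n ⊕ (−Q_n). -/
/-!
Write `T = λ + M`. Since `t₁ ≠ 0`, `M` is strictly upper triangular with nonzero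
superdiagonal, so the Krylov matrix `P` whose columns are `M^(n-1-j) eₙ` is invertible and
`T P = P J` with `J = J_n(λ)`; as `λ` is real, also `conj(T) conj(P) = conj(P) J`.

Upper triangular Toeplitz matrices `A` are persymmetric, `Q A = Aᵀ Q`, hence
`L = Pᴴ Q conj(P)` satisfies `L J = Jᵀ L`, and `c = ½ L⁻¹ Q` commutes with `J`. The matrix
`S = [[P, -P], [conj(P) c, conj(P) c]]` then intertwines `T ⊕ conj(T)` with `J ⊕ J`, and with
`X = L c = Q / 2` one gets
`Sᴴ Q₂ₙ S = [[X + Xᴴ, X - Xᴴ], [Xᴴ - X, -(X + Xᴴ)]] = Q ⊕ (-Q)`.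
The latter is invertible, so `S` is too.
-/

open Matrix

section Exchange

variable {n : ℕ}

theorem backQ_eq_submatrix_one :
    backQ n = (1 : Matrix (Fin n) (Fin n) ℂ).submatrix id Fin.revPerm := by
  ext i j
  simp only [backQ, submatrix_apply, one_apply, id, Fin.revPerm_apply, Fin.ext_iff, Fin.val_rev]
  grind

theorem backQ_mul_apply (A : Matrix (Fin n) (Fin n) ℂ) (i j : Fin n) :
    (backQ n * A) i j = A i.rev j := by
  rw [backQ_eq_submatrix_one, one_submatrix_mul]
  simp

theorem mul_backQ_apply (A : Matrix (Fin n) (Fin n) ℂ) (i j : Fin n) :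
    (A * backQ n) i j = A i j.rev := by
  rw [backQ_eq_submatrix_one, ← Equiv.coe_refl, mul_submatrix_one]
  simp

theorem backQ_mul_backQ : backQ n * backQ n = 1 := by
  ext i j
  rw [backQ_mul_apply, backQ_eq_submatrix_one]
  simp [one_apply, Fin.rev_eq_iff]

theorem conjTranspose_backQ : (backQ n)ᴴ = backQ n := by
  ext i j
  simp only [backQ, conjTranspose_apply, add_comm (j : ℕ)]
  split_ifs <;> simp

theorem backQ_mul_eq_transpose_mul_backQ {A : Matrix (Fin n) (Fin n) ℂ} (f : ℕ → ℂ)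
    (hA : ∀ i j : Fin n, A i j = if (i : ℕ) ≤ j then f (j - i) else 0) :
    backQ n * A = Aᵀ * backQ n := by
  ext i j
  rw [backQ_mul_apply, mul_backQ_apply, transpose_apply, hA, hA]
  simp only [Fin.val_rev]
  split_ifs <;> first | rfl | omega | (congr 1; omega)

end Exchange

section Jordan

variable {n : ℕ}

theorem jordanBlock_eq_smul_one_add (lam : ℂ) :
    jordanBlock n lam = lam • 1 + jordanBlock n 0 := by
  ext i j
  simp only [jordanBlock, Matrix.add_apply, Matrix.smul_apply, one_apply, Fin.ext_iff, smul_eq_mul]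
  split_ifs <;> simp_all

theorem jordanBlock_map_conj (lam : ℝ) :
    (jordanBlock n lam).map (starRingEnd ℂ) = jordanBlock n lam := by
  ext i j
  simp only [jordanBlock, map_apply]
  split_ifs <;> simp

theorem backQ_mul_jordanBlock (lam : ℂ) :
    backQ n * jordanBlock n lam = (jordanBlock n lam)ᵀ * backQ n :=
  backQ_mul_eq_transpose_mul_backQ (fun k => if k = 0 then lam else if k = 1 then 1 else 0)
    fun i j => by simp only [jordanBlock]; split_ifs <;> first | rfl | omega

theorem mul_jordanBlock_zero_apply_zero {m : ℕ} (A : Matrix (Fin (m + 1)) (Fin (m + 1)) ℂ)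
    (i : Fin (m + 1)) : (A * jordanBlock (m + 1) 0) i 0 = 0 := by
  simp [mul_apply, jordanBlock]

theorem mul_jordanBlock_zero_apply_succ {m : ℕ} (A : Matrix (Fin (m + 1)) (Fin (m + 1)) ℂ)
    (i : Fin (m + 1)) (k : Fin m) : (A * jordanBlock (m + 1) 0) i k.succ = A i k.castSucc := by
  rw [mul_apply, Finset.sum_eq_single k.castSucc (fun b _ hb => ?_) (by simp)]
  · simp [jordanBlock]
  · rw [Ne, Fin.ext_iff, Fin.val_castSucc] at hb
    simp [jordanBlock, hb]

end Jordan

section StrictlyUpper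

variable {R : Type*} [Semiring R] {n : ℕ} {M : Matrix (Fin n) (Fin n) R}

theorem pow_apply_eq_zero_of_lt (hup : ∀ i j : Fin n, (j : ℕ) ≤ i → M i j = 0) (k : ℕ)
    {i j : Fin n} (hij : (j : ℕ) < i + k) : (M ^ k) i j = 0 := by
  induction k generalizing i with
  | zero => exact one_apply_ne (by rintro rfl; omega)
  | succ k ih =>
    rw [pow_succ', mul_apply]
    refine Finset.sum_eq_zero fun b _ => ?_
    rcases le_or_gt (b : ℕ) i with hb | hb
    · rw [hup i b hb, zero_mul]
    · rw [ih (by omega), mul_zero]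

theorem pow_apply_of_add_eq {c : R} (hup : ∀ i j : Fin n, (j : ℕ) ≤ i → M i j = 0)
    (hsd : ∀ i j : Fin n, (i : ℕ) + 1 = j → M i j = c) (k : ℕ) {i j : Fin n}
    (hij : (i : ℕ) + k = j) : (M ^ k) i j = c ^ k := by
  induction k generalizing i with
  | zero => rw [pow_zero, pow_zero, show i = j by ext; omega, one_apply_eq]
  | succ k ih =>
    have hi : (i : ℕ) + 1 < n := by omega
    rw [pow_succ', mul_apply, Finset.sum_eq_single ⟨i + 1, hi⟩ (fun b _ hb => ?_) (by simp),
      hsd _ _ rfl, ih (by dsimp only; omega), pow_succ']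
    rcases le_or_gt (b : ℕ) i with hbi | hbi
    · rw [hup i b hbi, zero_mul]
    · rw [pow_apply_eq_zero_of_lt hup k (by rw [Ne, Fin.ext_iff] at hb; dsimp only at hb; omega),
        mul_zero]

end StrictlyUpper

section Krylov

variable {R : Type*} [CommRing R] {m : ℕ}

def krylov (M : Matrix (Fin (m + 1)) (Fin (m + 1)) R) : Matrix (Fin (m + 1)) (Fin (m + 1)) R :=
  of fun i j => (M ^ (j.rev : ℕ)) i (Fin.last m)

theorem mul_krylov_apply (M : Matrix (Fin (m + 1)) (Fin (m + 1)) R) (i j : Fin (m + 1)) :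
    (M * krylov M) i j = (M ^ ((j.rev : ℕ) + 1)) i (Fin.last m) := by
  rw [pow_succ', mul_apply]
  rfl

theorem mul_krylov {M : Matrix (Fin (m + 1)) (Fin (m + 1)) ℂ} (hM : M ^ (m + 1) = 0) :
    M * krylov M = krylov M * jordanBlock (m + 1) 0 := by
  ext i j
  rw [mul_krylov_apply]
  induction j using Fin.cases with
  | zero => simp [mul_jordanBlock_zero_apply_zero, hM]
  | succ k =>
    rw [mul_jordanBlock_zero_apply_succ, krylov, of_apply]
    simp only [Fin.val_rev, Fin.val_succ, Fin.val_castSucc]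
    rw [show m + 1 - (k + 1 + 1) + 1 = m + 1 - (k + 1) by omega]

theorem isUnit_krylov {M : Matrix (Fin (m + 1)) (Fin (m + 1)) R} {c : R}
    (hup : ∀ i j : Fin (m + 1), (j : ℕ) ≤ i → M i j = 0)
    (hsd : ∀ i j : Fin (m + 1), (i : ℕ) + 1 = j → M i j = c) (hc : IsUnit c) :
    IsUnit (krylov M) := by
  have hupper : (krylov M).IsUpperTriangular := fun i j (hji : j < i) =>
    pow_apply_eq_zero_of_lt hup _ (by simp only [Fin.val_last, Fin.val_rev]; omega)
  rw [isUnit_iff_isUnit_det, det_of_isUpperTriangular hupper, IsUnit.prod_univ_iff]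
  intro i
  rw [krylov, of_apply,
    pow_apply_of_add_eq hup hsd _ (by simp only [Fin.val_last, Fin.val_rev]; omega)]
  exact hc.pow _

end Krylov

theorem exists_isUnit_toeplitz_mul_eq_mul_jordanBlock {m : ℕ} {t : ℕ → ℂ}
    {T : Matrix (Fin (m + 1)) (Fin (m + 1)) ℂ}
    (hT : ∀ i j : Fin (m + 1), T i j = if (i : ℕ) ≤ j then t (j - i) else 0)
    (ht1 : t 1 ≠ 0) : ∃ P, IsUnit P ∧ T * P = P * jordanBlock (m + 1) (t 0) := by
  set M := T - t 0 • 1 with hM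
  have hup : ∀ i j : Fin (m + 1), (j : ℕ) ≤ i → M i j = 0 := by
    intro i j hji
    simp only [hM, Matrix.sub_apply, Matrix.smul_apply, hT, one_apply, Fin.ext_iff, smul_eq_mul]
    split_ifs <;> first | omega | simp [show (j : ℕ) - i = 0 by omega]
  have hsd : ∀ i j : Fin (m + 1), (i : ℕ) + 1 = j → M i j = t 1 := by
    intro i j hij
    simp only [hM, Matrix.sub_apply, Matrix.smul_apply, hT, one_apply, Fin.ext_iff, smul_eq_mul]
    split_ifs <;> first | omega | simp [show (j : ℕ) - i = 1 by omega]
  have hnil : M ^ (m + 1) = 0 := by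
    ext i j
    exact pow_apply_eq_zero_of_lt hup _ (by omega)
  have hTM : T = t 0 • 1 + M := by simp [hM]
  refine ⟨krylov M, isUnit_krylov hup hsd ht1.isUnit, ?_⟩
  rw [hTM, jordanBlock_eq_smul_one_add, add_mul, mul_add, ← mul_krylov hnil, smul_mul_assoc,
    one_mul, mul_smul_one]

section Doubling

variable {ι : Type*} [Fintype ι]

def doublingMatrix {α : Type*} [Ring α] (P R c : Matrix ι ι α) :
    Matrix (ι ⊕ ι) (ι ⊕ ι) α :=
  fromBlocks P (-P) (R * c) (R * c)

theorem fromBlocks_mul_doublingMatrix {α : Type*} [Ring α] {A A' J P R c : Matrix ι ι α}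
    (hP : A * P = P * J) (hR : A' * R = R * J) (hc : c * J = J * c) :
    fromBlocks A 0 0 A' * doublingMatrix P R c = doublingMatrix P R c * fromBlocks J 0 0 J := by
  have hRc : A' * (R * c) = R * c * J := by rw [← mul_assoc, hR, mul_assoc, ← hc, mul_assoc]
  simp [doublingMatrix, fromBlocks_multiply, hP, hRc]

theorem conjTranspose_doublingMatrix_mul_mul {P R c Q : Matrix ι ι ℂ} (hQ : Qᴴ = Q)
    (hX : Pᴴ * Q * R * c = (2⁻¹ : ℂ) • Q) :
    (doublingMatrix P R c)ᴴ * fromBlocks 0 Q Q 0 * doublingMatrix P R c =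
      fromBlocks Q 0 0 (-Q) := by
  have hX' : cᴴ * Rᴴ * Q * P = (2⁻¹ : ℂ) • Q := by
    simpa [conjTranspose_mul, hQ, mul_assoc] using congrArg conjTranspose hX
  simp only [doublingMatrix, fromBlocks_conjTranspose, fromBlocks_multiply, conjTranspose_mul,
    conjTranspose_neg]
  simp only [← mul_assoc, hX, hX', Matrix.mul_zero, add_zero, zero_add, Matrix.mul_neg,
    Matrix.neg_mul, add_neg_cancel, neg_add_cancel]
  congr 1 <;> module

theorem map_conj_mul_map_conj_of_mul_eq {A J P : Matrix ι ι ℂ} (hP : A * P = P * J)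
    (hJ : J.map (starRingEnd ℂ) = J) :
    A.map (starRingEnd ℂ) * P.map (starRingEnd ℂ) = P.map (starRingEnd ℂ) * J := by
  rw [← Matrix.map_mul, hP, Matrix.map_mul, hJ]

theorem semiconjBy_conjTranspose_mul_mul_map_conj {A J P Q : Matrix ι ι ℂ}
    (hP : A * P = P * J) (hJ : J.map (starRingEnd ℂ) = J)
    (hA : Q * A.map (starRingEnd ℂ) = (A.map (starRingEnd ℂ))ᵀ * Q) :
    SemiconjBy (Pᴴ * Q * P.map (starRingEnd ℂ)) J Jᵀ := by
  have hbar := map_conj_mul_map_conj_of_mul_eq hP hJ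
  have hPH : Pᴴ = (P.map (starRingEnd ℂ))ᵀ := rfl
  calc Pᴴ * Q * P.map (starRingEnd ℂ) * J
      = Pᴴ * (Q * A.map (starRingEnd ℂ)) * P.map (starRingEnd ℂ) := by
        simp only [mul_assoc, hbar]
    _ = (A.map (starRingEnd ℂ) * P.map (starRingEnd ℂ))ᵀ * Q * P.map (starRingEnd ℂ) := by
        rw [hA, transpose_mul, hPH]; simp only [mul_assoc]
    _ = Jᵀ * (Pᴴ * Q * P.map (starRingEnd ℂ)) := by
        rw [hbar, transpose_mul, hPH]; simp only [mul_assoc]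

theorem exists_fromBlocks_similar_and_congr [DecidableEq ι] {A J P Q : Matrix ι ι ℂ}
    (hP : A * P = P * J) (hPu : IsUnit P) (hJ : J.map (starRingEnd ℂ) = J) (hQ : Qᴴ = Q)
    (hQu : IsUnit Q) (hA : Q * A.map (starRingEnd ℂ) = (A.map (starRingEnd ℂ))ᵀ * Q)
    (hQJ : Q * J = Jᵀ * Q) :
    ∃ S : Matrix (ι ⊕ ι) (ι ⊕ ι) ℂ, IsUnit S ∧
      S⁻¹ * fromBlocks A 0 0 (A.map (starRingEnd ℂ)) * S = fromBlocks J 0 0 J ∧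
      Sᴴ * fromBlocks 0 Q Q 0 * S = fromBlocks Q 0 0 (-Q) := by
  set L := Pᴴ * Q * P.map (starRingEnd ℂ)
  have hL : IsUnit L.det := by
    rw [← isUnit_iff_isUnit_det]
    exact ((star_eq_conjTranspose P ▸ hPu.star).mul hQu).mul
      (hPu.map (RingHom.mapMatrix (starRingEnd ℂ)))
  have hLJ : L⁻¹ * Jᵀ = J * L⁻¹ := by
    calc L⁻¹ * Jᵀ = L⁻¹ * (Jᵀ * L) * L⁻¹ := by
          rw [mul_assoc, mul_assoc, mul_nonsing_inv _ hL, mul_one]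
      _ = J * L⁻¹ := by
          rw [← (semiconjBy_conjTranspose_mul_mul_map_conj hP hJ hA).eq, ← mul_assoc,
            nonsing_inv_mul _ hL, one_mul]
  set c := (2⁻¹ : ℂ) • (L⁻¹ * Q)
  have hc : c * J = J * c := by
    simp only [c, smul_mul_assoc, mul_smul_comm, mul_assoc, hQJ]
    rw [← mul_assoc L⁻¹, hLJ, mul_assoc]
  have hX : L * c = (2⁻¹ : ℂ) • Q := by
    rw [mul_smul_comm, ← mul_assoc, mul_nonsing_inv _ hL, one_mul]
  have hform := conjTranspose_doublingMatrix_mul_mul (R := P.map (starRingEnd ℂ)) hQ hX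
  have hS := isUnit_of_mul_isUnit_right
    (hform ▸ isUnit_fromBlocks_zero₂₁.2 ⟨hQu, hQu.neg⟩)
  refine ⟨_, hS, ?_, hform⟩
  rw [mul_assoc, fromBlocks_mul_doublingMatrix hP (map_conj_mul_map_conj_of_mul_eq hP hJ) hc,
    ← mul_assoc, nonsing_inv_mul _ ((isUnit_iff_isUnit_det _).1 hS), one_mul]

end Doubling

theorem backQ_add_self {n : ℕ} :
    backQ (n + n) =
      reindex finSumFinEquiv finSumFinEquiv (fromBlocks 0 (backQ n) (backQ n) 0) := by
  ext i j
  obtain ⟨i, rfl⟩ := finSumFinEquiv.surjective i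
  obtain ⟨j, rfl⟩ := finSumFinEquiv.surjective j
  rcases i with i | i <;> rcases j with j | j <;>
    simp only [backQ, reindex_apply, submatrix_apply, fromBlocks_apply₁₁,
      fromBlocks_apply₁₂, fromBlocks_apply₂₁, fromBlocks_apply₂₂, Matrix.zero_apply,
      finSumFinEquiv_apply_left, finSumFinEquiv_apply_right, finSumFinEquiv_symm_apply_castAdd,
      finSumFinEquiv_symm_apply_natAdd, Fin.val_castAdd, Fin.val_natAdd] <;>
    grind

theorem toeplitz_dsum_canonical_form (n : ℕ) (lam : ℝ) (t : ℕ → ℂ)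
    (T : Matrix (Fin n) (Fin n) ℂ)
    (hT : ∀ i j : Fin n, T i j = if (i : ℕ) ≤ (j : ℕ) then t ((j : ℕ) - (i : ℕ)) else 0)
    (ht0 : t 0 = (lam : ℂ)) (ht1 : t 1 ≠ 0) :
    ∃ S : Matrix (Fin (n + n)) (Fin (n + n)) ℂ, IsUnit S ∧
      S⁻¹ * dsum T (T.map (starRingEnd ℂ)) * S =
        dsum (jordanBlock n (lam : ℂ)) (jordanBlock n (lam : ℂ)) ∧
      Sᴴ * backQ (n + n) * S = dsum (backQ n) (-(backQ n)) := by
  obtain _ | m := n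
  · refine ⟨1, isUnit_one, ?_, ?_⟩ <;> ext i <;> exact i.elim0
  obtain ⟨P, hPu, hTP⟩ := exists_isUnit_toeplitz_mul_eq_mul_jordanBlock hT ht1
  rw [ht0] at hTP
  have hTbar : backQ (m + 1) * T.map (starRingEnd ℂ) =
      (T.map (starRingEnd ℂ))ᵀ * backQ (m + 1) :=
    backQ_mul_eq_transpose_mul_backQ (fun k => starRingEnd ℂ (t k)) fun i j => by
      rw [map_apply, hT, apply_ite (starRingEnd ℂ), map_zero]
  obtain ⟨S, hS, hsim, hform⟩ := exists_fromBlocks_similar_and_congr hTP hPu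
    (jordanBlock_map_conj lam) conjTranspose_backQ (.of_mul_eq_one _ backQ_mul_backQ)
    hTbar (backQ_mul_jordanBlock _)
  refine ⟨reindex finSumFinEquiv finSumFinEquiv S, ?_, ?_, ?_⟩
  · exact hS.map (reindexAlgEquiv ℂ ℂ finSumFinEquiv)
  · simp only [dsum, reindex_apply, inv_submatrix_equiv, submatrix_mul_equiv, hsim]
  · simp only [dsum, backQ_add_self, reindex_apply, conjTranspose_submatrix, submatrix_mul_equiv,
      hform]
end

section
/- The matrix Q_{2n}(B − λI)^{n−1}, where B = T ⊕ conj(T) with T upper-triangular Toeplitz with real diagonal λ and nonzero superdiagonal entry t₂, has exactly one positive eigenvalue and one negative eigenvalue (both equal to ±|t₂|^{n−1}), all other eigenvalues being zero. -/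
open Matrix

/-!
`N = T - λ • 1` is strictly upper triangular with constant superdiagonal `t₂`, so `N ^ (n - 1)`
is `t₂ ^ (n - 1)` times the corner matrix unit. Hence `(B - λ • 1) ^ (n - 1)` has only two
nonzero entries, and `Q₂ₙ` moves them to mirror positions: the matrix is `M = c E_ab + c̄ E_ba`
with `c = t₂ ^ (n - 1)` and `a ≠ b`. It satisfies `M ^ 3 = ‖c‖ ^ 2 • M`, so each eigenvalue is
`‖c‖`, `-‖c‖` or `0`, and `tr M = 0`, `tr M ^ 2 = 2 ‖c‖ ^ 2` leave exactly one of each sign.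
-/

theorem card_pos_eq_one_and_card_neg_eq_one {ι : Type*} [Fintype ι] {f : ι → ℝ} {r : ℝ}
    (hr : 0 < r) (hf : ∀ i, f i = r ∨ f i = -r ∨ f i = 0) (hsum : ∑ i, f i = 0)
    (hsq : ∑ i, f i ^ 2 = 2 * r ^ 2) :
    Nat.card {i // 0 < f i} = 1 ∧ Nat.card {i // f i < 0} = 1 := by
  set p := (Finset.univ.filter fun i => 0 < f i).card
  set q := (Finset.univ.filter fun i => f i < 0).card
  have hlin : ∀ i, f i = r * ((if 0 < f i then 1 else 0) - (if f i < 0 then 1 else 0)) := by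
    intro i
    rcases hf i with h | h | h <;> simp [h, hr, hr.not_gt]
  have hquad :
      ∀ i, f i ^ 2 = r ^ 2 * ((if 0 < f i then 1 else 0) + (if f i < 0 then 1 else 0)) := by
    intro i
    rcases hf i with h | h | h <;> simp [h, hr, hr.not_gt]
  have hsum_pq : r * ((p : ℝ) - q) = 0 := by
    rw [← hsum, Finset.sum_congr rfl fun i _ => hlin i, ← Finset.mul_sum, Finset.sum_sub_distrib,
      Finset.sum_boole, Finset.sum_boole]
  have hsq_pq : r ^ 2 * ((p : ℝ) + q) = 2 * r ^ 2 := by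
    rw [← hsq, Finset.sum_congr rfl fun i _ => hquad i, ← Finset.mul_sum, Finset.sum_add_distrib,
      Finset.sum_boole, Finset.sum_boole]
  have hp : (p : ℝ) = 1 ∧ (q : ℝ) = 1 := by
    have hdiff := mul_left_cancel₀ hr.ne' (hsum_pq.trans (mul_zero r).symm)
    have htotal := mul_left_cancel₀ (pow_pos hr 2).ne' (hsq_pq.trans (mul_comm _ _))
    constructor <;> linarith
  simp only [Nat.card_eq_fintype_card, Fintype.card_subtype]
  exact_mod_cast hp

namespace Matrix

namespace IsHermitian

variable {𝕜 n : Type*} [RCLike 𝕜] [Fintype n] [DecidableEq n] {A : Matrix n n 𝕜}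

theorem trace_pow_eq_sum_eigenvalues_pow (hA : A.IsHermitian) (k : ℕ) :
    (A ^ k).trace = ∑ i, (hA.eigenvalues i : 𝕜) ^ k := by
  conv_lhs => rw [hA.spectral_theorem, ← map_pow, Unitary.conjStarAlgAut_apply, trace_mul_cycle,
    Unitary.coe_star_mul_self, one_mul, diagonal_pow, trace_diagonal]
  simp

theorem pow_mulVec_eigenvectorBasis (hA : A.IsHermitian) (k : ℕ) (j : n) :
    (A ^ k) *ᵥ ⇑(hA.eigenvectorBasis j) = (hA.eigenvalues j ^ k) • ⇑(hA.eigenvectorBasis j) := by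
  induction k with
  | zero => simp
  | succ k ih =>
    rw [pow_succ', ← mulVec_mulVec, ih, mulVec_smul, hA.mulVec_eigenvectorBasis, smul_smul, pow_succ]

theorem eigenvalues_pow_eq_of_pow_eq_smul_pow (hA : A.IsHermitian) {k l : ℕ} {s : ℝ}
    (h : A ^ k = (s : 𝕜) • A ^ l) (j : n) :
    hA.eigenvalues j ^ k = s * hA.eigenvalues j ^ l := by
  have hv : ⇑(hA.eigenvectorBasis j) ≠ 0 :=
    (WithLp.ofLp_eq_zero 2).ne.2 (hA.eigenvectorBasis.orthonormal.ne_zero j)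
  have := hA.pow_mulVec_eigenvectorBasis k j
  rw [h, smul_mulVec, hA.pow_mulVec_eigenvectorBasis, ← RCLike.real_smul_eq_coe_smul,
    smul_smul] at this
  exact (smul_left_injective ℝ hv this).symm

theorem inertia_of_pow_three_eq_smul (hA : A.IsHermitian) {r : ℝ} (hr : 0 < r)
    (hcube : A ^ 3 = ((r ^ 2 : ℝ) : 𝕜) • A) (htr : A.trace = 0)
    (htr_sq : (A ^ 2).trace = ((2 * r ^ 2 : ℝ) : 𝕜)) :
    Nat.card {i // 0 < hA.eigenvalues i} = 1 ∧ Nat.card {i // hA.eigenvalues i < 0} = 1 ∧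
      ∀ i, hA.eigenvalues i = r ∨ hA.eigenvalues i = -r ∨ hA.eigenvalues i = 0 := by
  have hmem : ∀ i, hA.eigenvalues i = r ∨ hA.eigenvalues i = -r ∨ hA.eigenvalues i = 0 := by
    intro i
    have h := hA.eigenvalues_pow_eq_of_pow_eq_smul_pow (k := 3) (l := 1) (s := r ^ 2)
      (by rwa [pow_one]) i
    have : (hA.eigenvalues i - r) * (hA.eigenvalues i + r) * hA.eigenvalues i = 0 := by
      linear_combination h
    rcases mul_eq_zero.1 this with h | h
    · rcases mul_eq_zero.1 h with h | h
      · exact .inl (by linarith)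
      · exact .inr (.inl (by linarith))
    · exact .inr (.inr h)
  have hsum : ∑ i, hA.eigenvalues i = 0 := by
    have := hA.trace_eq_sum_eigenvalues
    rw [htr] at this
    exact_mod_cast this.symm
  have hsq : ∑ i, hA.eigenvalues i ^ 2 = 2 * r ^ 2 := by
    have := hA.trace_pow_eq_sum_eigenvalues_pow 2
    rw [htr_sq] at this
    exact_mod_cast this.symm
  obtain ⟨hpos, hneg⟩ := card_pos_eq_one_and_card_neg_eq_one hr hmem hsum hsq
  exact ⟨hpos, hneg, hmem⟩

end IsHermitian

section SingleAddSingleStar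

variable {𝕜 n : Type*} [RCLike 𝕜] [DecidableEq n] (c : 𝕜) {a b : n}

theorem isHermitian_single_add_single_star (a b : n) :
    (single a b c + single b a (star c)).IsHermitian := by
  simp [IsHermitian, add_comm]

variable [Fintype n]

theorem single_add_single_star_sq (hab : a ≠ b) :
    (single a b c + single b a (star c)) ^ 2 =
      single a a ((‖c‖ ^ 2 : ℝ) : 𝕜) + single b b ((‖c‖ ^ 2 : ℝ) : 𝕜) := by
  rw [sq, add_mul, mul_add, mul_add, single_mul_single_same, single_mul_single_same,
    single_mul_single_of_ne (h := hab.symm), single_mul_single_of_ne (h := hab)]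
  simp [RCLike.star_def, RCLike.mul_conj, RCLike.conj_mul]

theorem single_add_single_star_pow_three (hab : a ≠ b) :
    (single a b c + single b a (star c)) ^ 3 =
      ((‖c‖ ^ 2 : ℝ) : 𝕜) • (single a b c + single b a (star c)) := by
  rw [pow_succ, single_add_single_star_sq c hab, add_mul, mul_add, mul_add,
    single_mul_single_same, single_mul_single_same,
    single_mul_single_of_ne (h := hab), single_mul_single_of_ne (h := hab.symm)]
  simp [smul_single]

theorem trace_single_add_single_star (hab : a ≠ b) :
    (single a b c + single b a (star c)).trace = 0 := by
  rw [trace_add, trace_single_eq_of_ne _ _ _ hab, trace_single_eq_of_ne _ _ _ hab.symm, add_zero]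

theorem trace_single_add_single_star_sq (hab : a ≠ b) :
    ((single a b c + single b a (star c)) ^ 2).trace = ((2 * ‖c‖ ^ 2 : ℝ) : 𝕜) := by
  rw [single_add_single_star_sq c hab, trace_add, trace_single_eq_same, trace_single_eq_same]
  push_cast
  ring

theorem inertia_single_add_single_star (hab : a ≠ b) (hc : c ≠ 0) :
    ∃ hA : (single a b c + single b a (star c)).IsHermitian,
      Nat.card {i // 0 < hA.eigenvalues i} = 1 ∧ Nat.card {i // hA.eigenvalues i < 0} = 1 ∧
      ∀ i, hA.eigenvalues i = ‖c‖ ∨ hA.eigenvalues i = -‖c‖ ∨ hA.eigenvalues i = 0 :=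
  ⟨_, (isHermitian_single_add_single_star c a b).inertia_of_pow_three_eq_smul (norm_pos_iff.2 hc)
    (single_add_single_star_pow_three c hab) (trace_single_add_single_star c hab)
    (trace_single_add_single_star_sq c hab)⟩

end SingleAddSingleStar

section Superdiagonal

variable {R : Type*} [Semiring R]

theorem pow_apply_of_superdiagonal {m : ℕ} {N : Matrix (Fin m) (Fin m) R} {c : R}
    (hlower : ∀ i j : Fin m, (j : ℕ) ≤ i → N i j = 0)
    (hsuper : ∀ i j : Fin m, (j : ℕ) = i + 1 → N i j = c) (k : ℕ) (i j : Fin m) :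
    ((j : ℕ) < i + k → (N ^ k) i j = 0) ∧ ((j : ℕ) = i + k → (N ^ k) i j = c ^ k) := by
  induction k generalizing i with
  | zero =>
    refine ⟨fun h => one_apply_ne' (Fin.ne_of_lt h), fun h => ?_⟩
    rw [Fin.ext h, pow_zero, one_apply_eq, pow_zero]
  | succ k ih =>
    have hzero : ∀ l : Fin m, (j : ℕ) < l + k ∨ (l : ℕ) ≤ i → N i l * (N ^ k) l j = 0 := by
      rintro l (h | h)
      · rw [(ih l).1 h, mul_zero]
      · rw [hlower i l h, zero_mul]
    rw [pow_succ', mul_apply]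
    refine ⟨fun h => Finset.sum_eq_zero fun l _ => hzero l (by omega), fun h => ?_⟩
    have hi : (i : ℕ) + 1 < m := by omega
    rw [Finset.sum_eq_single ⟨i + 1, hi⟩ (fun l _ hl => hzero l ?_) (by simp), hsuper i _ rfl,
      (ih _).2 (by dsimp only; omega), pow_succ']
    simp only [ne_eq, Fin.ext_iff] at hl
    omega

theorem pow_eq_single_of_superdiagonal {k : ℕ} {N : Matrix (Fin (k + 1)) (Fin (k + 1)) R} {c : R}
    (hlower : ∀ i j : Fin (k + 1), (j : ℕ) ≤ i → N i j = 0)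
    (hsuper : ∀ i j : Fin (k + 1), (j : ℕ) = i + 1 → N i j = c) :
    N ^ k = single 0 (Fin.last k) (c ^ k) := by
  ext i j
  have hpow := pow_apply_of_superdiagonal hlower hsuper k i j
  rw [single_apply]
  split_ifs with h
  · obtain ⟨rfl, rfl⟩ := h
    exact hpow.2 (by simp)
  · simp only [Fin.ext_iff, Fin.val_zero, Fin.val_last] at h
    exact hpow.1 (by omega)

end Superdiagonal

theorem sub_smul_one_pow_eq_single_of_upperToeplitz {R : Type*} [Ring R] {k : ℕ}
    {T : Matrix (Fin (k + 1)) (Fin (k + 1)) R} {t : ℕ → R}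
    (hT : ∀ i j : Fin (k + 1), T i j = if (i : ℕ) ≤ j then t (j - i) else 0) :
    (T - t 0 • 1) ^ k = single 0 (Fin.last k) (t 1 ^ k) := by
  refine pow_eq_single_of_superdiagonal (fun i j hji => ?_) (fun i j hji => ?_)
  · rcases hji.lt_or_eq with hlt | heq
    · simp [hT, one_apply_ne' (Fin.ne_of_lt hlt), hlt.not_ge]
    · obtain rfl := Fin.ext heq
      simp [hT]
  · simp [hT, hji, one_apply_ne (Fin.ne_of_lt (by omega : (i : ℕ) < j))]

end Matrix

theorem backQ_mul_single {m : ℕ} (i j : Fin m) (c : ℂ) :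
    backQ m * single i j c = single i.rev j c := by
  ext x y
  rw [mul_apply, Finset.sum_eq_single i (fun l _ hl => by simp [hl.symm]) (by simp)]
  simp only [backQ, single_apply, Fin.ext_iff, Fin.val_rev, true_and]
  split_ifs <;> grind

section dsum

variable {n : ℕ}

theorem dsum_eq_reindexAlgEquiv (A B : Matrix (Fin n) (Fin n) ℂ) :
    dsum A B = reindexAlgEquiv ℂ ℂ finSumFinEquiv (fromBlocks A 0 0 B) := rfl

theorem dsum_pow (A B : Matrix (Fin n) (Fin n) ℂ) (k : ℕ) :
    dsum A B ^ k = dsum (A ^ k) (B ^ k) := by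
  rw [dsum_eq_reindexAlgEquiv, ← map_pow, fromBlocks_diagonal_pow, dsum_eq_reindexAlgEquiv]

theorem dsum_sub_smul_one (A B : Matrix (Fin n) (Fin n) ℂ) (z : ℂ) :
    dsum A B - z • 1 = dsum (A - z • 1) (B - z • 1) := by
  rw [dsum_eq_reindexAlgEquiv, dsum_eq_reindexAlgEquiv,
    ← map_one (reindexAlgEquiv ℂ ℂ (finSumFinEquiv (m := n) (n := n))), ← map_smul, ← map_sub,
    ← fromBlocks_one, fromBlocks_smul]
  congr 1
  ext (i | i) (j | j) <;> simp

theorem dsum_single (i j : Fin n) (c d : ℂ) :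
    dsum (single i j c) (single i j d) =
      single (Fin.castAdd n i) (Fin.castAdd n j) c +
        single (Fin.natAdd n i) (Fin.natAdd n j) d := by
  have : fromBlocks (single i j c) 0 0 (single i j d) =
      single (Sum.inl i) (Sum.inl j) c + single (Sum.inr i) (Sum.inr j) d := by
    ext (x | x) (y | y) <;> simp [single_apply]
  rw [dsum_eq_reindexAlgEquiv, this, map_add, coe_reindexAlgEquiv, reindex_apply, reindex_apply,
    submatrix_single_equiv, submatrix_single_equiv]
  simp

theorem backQ_mul_dsum_single (k : ℕ) (c d : ℂ) :
    backQ (k + 1 + (k + 1)) * dsum (single 0 (Fin.last k) c) (single 0 (Fin.last k) d) =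
      single (Fin.natAdd (k + 1) (Fin.last k)) (Fin.castAdd (k + 1) (Fin.last k)) c +
        single (Fin.castAdd (k + 1) (Fin.last k)) (Fin.natAdd (k + 1) (Fin.last k)) d := by
  have hrev₁ : (Fin.castAdd (k + 1) (0 : Fin (k + 1))).rev = Fin.natAdd (k + 1) (Fin.last k) := by
    ext
    simp
  have hrev₂ : (Fin.natAdd (k + 1) (0 : Fin (k + 1))).rev = Fin.castAdd (k + 1) (Fin.last k) := by
    ext
    simp only [Fin.val_rev, Fin.val_natAdd, Fin.val_castAdd, Fin.val_last, Fin.val_zero]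
    omega
  rw [dsum_single, mul_add, backQ_mul_single, backQ_mul_single, hrev₁, hrev₂]

end dsum

theorem inertia_of_Q_times_power (n : ℕ) (hn : 0 < n) (lam : ℝ) (t : ℕ → ℂ)
    (T : Matrix (Fin n) (Fin n) ℂ)
    (hT : ∀ i j : Fin n, T i j = if (i : ℕ) ≤ (j : ℕ) then t ((j : ℕ) - (i : ℕ)) else 0)
    (ht0 : t 0 = (lam : ℂ)) (ht1 : t 1 ≠ 0) :
    ∃ hM : (backQ (n + n) *
        (dsum T (T.map (starRingEnd ℂ)) - (lam : ℂ) • 1) ^ (n - 1)).IsHermitian,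
      Nat.card {i // 0 < hM.eigenvalues i} = 1 ∧
      Nat.card {i // hM.eigenvalues i < 0} = 1 ∧
      ∀ i, hM.eigenvalues i = ‖t 1‖ ^ (n - 1) ∨
        hM.eigenvalues i = -(‖t 1‖ ^ (n - 1)) ∨
        hM.eigenvalues i = 0 := by
  obtain ⟨k, rfl⟩ : ∃ k, n = k + 1 := ⟨n - 1, by omega⟩
  have hN : (T - (lam : ℂ) • 1) ^ k = single 0 (Fin.last k) (t 1 ^ k) :=
    ht0 ▸ sub_smul_one_pow_eq_single_of_upperToeplitz hT
  have hconj :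
      T.map (starRingEnd ℂ) - (lam : ℂ) • 1 = (T - (lam : ℂ) • 1).map (starRingEnd ℂ) := by
    ext i j
    by_cases h : i = j <;> simp [h]
  have hM : backQ (k + 1 + (k + 1)) *
      (dsum T (T.map (starRingEnd ℂ)) - (lam : ℂ) • 1) ^ (k + 1 - 1) =
        single (Fin.natAdd (k + 1) (Fin.last k)) (Fin.castAdd (k + 1) (Fin.last k)) (t 1 ^ k) +
        single (Fin.castAdd (k + 1) (Fin.last k)) (Fin.natAdd (k + 1) (Fin.last k))
          (star (t 1 ^ k)) := by
    rw [Nat.add_sub_cancel, dsum_sub_smul_one, hconj, dsum_pow, ← Matrix.map_pow, hN, map_single,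
      backQ_mul_dsum_single]
    rfl
  have hab : Fin.natAdd (k + 1) (Fin.last k) ≠ Fin.castAdd (k + 1) (Fin.last k) := by
    simp [Fin.ext_iff]
  rw [hM]
  simpa [norm_pow] using inertia_single_add_single_star (t 1 ^ k) hab (pow_ne_zero k ht1)
end

section
/- Let m be even, λ a negative real number, and H = εQ_n with ε = ±1. Then the n×n Jordan block B = J_n(λ) has no H-selfadjoint m-th root: there is no matrix A with A^m = B and HA = A*H. -/
/-!
A matrix `A` with `A ^ m = J_n(λ)` commutes with `J_n(λ)`, hence is upper triangular Toeplitz: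
its diagonal is a constant `a` and `(A ^ m) 0 0 = a ^ m = λ`. Since `Q_n` is the reversal
permutation, `Q_n A = Aᴴ Q_n` read at the corner entry `(n - 1, 0)` says
`a = A 0 0 = conj (A (n-1) (n-1)) = conj a`, so `a` is real and `a ^ m ≥ 0 > λ` for even `m`.
-/

open Matrix

theorem Matrix.pow_apply_self_of_apply_eq_zero {ι R : Type*} [Fintype ι] [DecidableEq ι]
    [Semiring R] {A : Matrix ι ι R} {i : ι} (hcol : ∀ j, j ≠ i → A j i = 0) (k : ℕ) :
    (A ^ k) i i = A i i ^ k := by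
  induction k with
  | zero => simp
  | succ k ih =>
    rw [pow_succ, mul_apply, Finset.sum_eq_single i (fun j _ hj => by rw [hcol j hj, mul_zero])
      (by simp), ih, pow_succ]

section JordanBlock

variable {n : ℕ} (lam : ℂ) (A : Matrix (Fin (n + 1)) (Fin (n + 1)) ℂ)

theorem jordanBlock_apply_self (i : Fin n) : jordanBlock n lam i i = lam := if_pos rfl

theorem jordanBlock_mul_apply_castSucc (i : Fin n) (j : Fin (n + 1)) :
    (jordanBlock (n + 1) lam * A) i.castSucc j = lam * A i.castSucc j + A i.succ j := by
  rw [mul_apply, Fintype.sum_eq_add i.castSucc i.succ (Fin.castSucc_lt_succ (i := i)).ne]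
  · simp [jordanBlock]
  · rintro k ⟨hk₁, hk₂⟩
    simp only [jordanBlock]
    rw [if_neg, if_neg, zero_mul]
    · exact fun h => hk₂ (Fin.ext (by simpa using h.symm))
    · exact fun h => hk₁ (Fin.ext (by simpa using h.symm))

theorem mul_jordanBlock_apply_succ (i : Fin (n + 1)) (j : Fin n) :
    (A * jordanBlock (n + 1) lam) i j.succ = lam * A i j.succ + A i j.castSucc := by
  rw [mul_apply, Fintype.sum_eq_add j.succ j.castSucc (Fin.castSucc_lt_succ (i := j)).ne']
  · simp [jordanBlock, mul_comm]
  · rintro k ⟨hk₁, hk₂⟩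
    simp only [jordanBlock]
    rw [if_neg, if_neg, mul_zero]
    · exact fun h => hk₂ (Fin.ext (by simpa using h))
    · exact fun h => hk₁ (Fin.ext (by simpa using h))

theorem mul_jordanBlock_apply_zero (i : Fin (n + 1)) :
    (A * jordanBlock (n + 1) lam) i 0 = lam * A i 0 := by
  rw [mul_apply, Fintype.sum_eq_single 0]
  · simp [jordanBlock, mul_comm]
  · intro k hk
    simp only [jordanBlock]
    rw [if_neg, if_neg, mul_zero]
    · simp
    · simpa [Fin.val_eq_zero_iff] using hk

variable {lam A}

theorem apply_zero_eq_zero_of_commute_jordanBlock (hc : Commute (jordanBlock (n + 1) lam) A)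
    (i : Fin (n + 1)) (hi : i ≠ 0) : A i 0 = 0 := by
  obtain ⟨i, rfl⟩ := Fin.exists_succ_eq.mpr hi
  have h := congrFun (congrFun hc.eq i.castSucc) 0
  rwa [jordanBlock_mul_apply_castSucc, mul_jordanBlock_apply_zero, add_eq_left] at h

theorem apply_succ_succ_of_commute_jordanBlock (hc : Commute (jordanBlock (n + 1) lam) A)
    (i j : Fin n) : A i.succ j.succ = A i.castSucc j.castSucc := by
  have h := congrFun (congrFun hc.eq i.castSucc) j.succ
  rwa [jordanBlock_mul_apply_castSucc, mul_jordanBlock_apply_succ, add_right_inj] at h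

theorem apply_self_eq_of_commute_jordanBlock (hc : Commute (jordanBlock (n + 1) lam) A)
    (i : Fin (n + 1)) : A i i = A 0 0 := by
  induction i using Fin.induction with
  | zero => rfl
  | succ i ih => rw [apply_succ_succ_of_commute_jordanBlock hc, ih]

end JordanBlock

theorem backQ_eq_toMatrix_revPerm (n : ℕ) : backQ n = Fin.revPerm.toPEquiv.toMatrix := by
  ext i j
  simp only [backQ, PEquiv.toMatrix_apply, Equiv.toPEquiv_apply, Option.mem_def,
    Option.some.injEq, Fin.revPerm_apply, Fin.ext_iff, Fin.val_rev]
  congr 1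
  apply propext
  omega

theorem apply_rev_eq_star_of_backQ_mul_eq {n : ℕ} {A : Matrix (Fin n) (Fin n) ℂ}
    (h : backQ n * A = Aᴴ * backQ n) (i j : Fin n) : A i.rev j = star (A j.rev i) := by
  rw [backQ_eq_toMatrix_revPerm, PEquiv.toMatrix_toPEquiv_mul,
    PEquiv.mul_toMatrix_toPEquiv] at h
  simpa using congrFun (congrFun h i) j

theorem no_H_selfadjoint_even_root_negative_block_general (n m : ℕ) (hn : 0 < n)
    (hme : Even m) (lam : ℝ) (hlam : lam < 0)
    (ε : ℝ) (hε : ε = 1 ∨ ε = -1) :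
    ¬ ∃ A : Matrix (Fin n) (Fin n) ℂ,
        A ^ m = jordanBlock n (lam : ℂ) ∧
        ((ε : ℂ) • backQ n) * A = Aᴴ * ((ε : ℂ) • backQ n) := by
  rintro ⟨A, hpow, hself⟩
  obtain ⟨n, rfl⟩ := Nat.exists_eq_add_one_of_ne_zero hn.ne'
  have hcomm : Commute (jordanBlock (n + 1) lam) A := hpow ▸ (Commute.self_pow A m).symm
  have hQ : backQ (n + 1) * A = Aᴴ * backQ (n + 1) := by
    have hε0 : (ε : ℂ) ≠ 0 := by rcases hε with rfl | rfl <;> norm_num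
    rw [Matrix.smul_mul, Matrix.mul_smul] at hself
    exact smul_right_injective _ hε0 hself
  have hreal : star (A 0 0) = A 0 0 := by
    have h := apply_rev_eq_star_of_backQ_mul_eq hQ (Fin.last n) 0
    rwa [Fin.rev_last, Fin.rev_zero, apply_self_eq_of_commute_jordanBlock hcomm (Fin.last n),
      eq_comm] at h
  have hdiag : A 0 0 ^ m = lam := by
    rw [← pow_apply_self_of_apply_eq_zero (apply_zero_eq_zero_of_commute_jordanBlock hcomm),
      hpow, jordanBlock_apply_self]
  obtain ⟨a, ha⟩ := Complex.conj_eq_iff_real.mp hreal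
  rw [ha, ← Complex.ofReal_pow, Complex.ofReal_inj] at hdiag
  linarith [hme.pow_nonneg a]

theorem no_H_selfadjoint_even_root_negative_block (n m : ℕ) (hn : 0 < n)
    (hm : 0 < m) (hme : Even m) (lam : ℝ) (hlam : lam < 0)
    (ε : ℝ) (hε : ε = 1 ∨ ε = -1) :
    ¬ ∃ A : Matrix (Fin n) (Fin n) ℂ,
        A ^ m = jordanBlock n (lam : ℂ) ∧
        ((ε : ℂ) • backQ n) * A = Aᴴ * ((ε : ℂ) • backQ n) :=
  no_H_selfadjoint_even_root_negative_block_general n m hn hme lam hlam ε hε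
end

section
/- Let m be odd, λ < 0 real, ε = ±1, B = J_n(λ), H = εQ_n. Then there exists an H-selfadjoint matrix A with A^m = B. -/
open Matrix

section Aux

open Polynomial

def NrM (n : ℕ) : Matrix (Fin n) (Fin n) ℝ :=
  fun i j => if (i : ℕ) + 1 = (j : ℕ) then 1 else 0

def QrM (n : ℕ) : Matrix (Fin n) (Fin n) ℝ :=
  fun i j => if (i : ℕ) + (j : ℕ) + 1 = n then 1 else 0

lemma Nr_pow_apply (n k : ℕ) (i j : Fin n) :
    (NrM n ^ k) i j = if (i : ℕ) + k = (j : ℕ) then 1 else 0 := by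
  induction k generalizing i j with
  | zero => simp [Matrix.one_apply, Fin.ext_iff]
  | succ k ih =>
    rw [pow_succ, Matrix.mul_apply]
    by_cases h : (i : ℕ) + k < n
    · have hcond : ∀ l : Fin n, ((i : ℕ) + k = (l : ℕ)) ↔ l = ⟨(i:ℕ)+k, h⟩ := by
        intro l; rw [Fin.ext_iff]; simp only [Fin.val_mk]; omega
      calc (∑ l, (NrM n ^ k) i l * NrM n l j)
          = ∑ l, if l = (⟨(i:ℕ)+k, h⟩ : Fin n) then NrM n l j else 0 := by
            refine Finset.sum_congr rfl fun l _ => ?_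
            rw [ih, if_congr (hcond l) rfl rfl, ite_mul, one_mul, zero_mul]
        _ = NrM n (⟨(i:ℕ)+k, h⟩ : Fin n) j := by
            rw [Finset.sum_ite_eq' Finset.univ]; simp
        _ = if (i : ℕ) + (k+1) = (j : ℕ) then 1 else 0 := by
            simp only [NrM]
            exact if_congr (by omega) rfl rfl
    · have h1 : ∀ l : Fin n, (NrM n ^ k) i l = 0 := by
        intro l; rw [ih, if_neg (by have := l.isLt; omega)]
      simp only [h1, zero_mul, Finset.sum_const_zero]
      rw [if_neg (by have := j.isLt; omega)]

lemma Nr_pow_n (n : ℕ) : NrM n ^ n = 0 := by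
  ext i j
  rw [Nr_pow_apply, if_neg (by have := j.isLt; have := i.isLt; omega)]
  rfl

lemma Qr_mul_apply (n : ℕ) (M : Matrix (Fin n) (Fin n) ℝ) (i j : Fin n) :
    (QrM n * M) i j = M i.rev j := by
  rw [Matrix.mul_apply]
  have hcond : ∀ l : Fin n, ((i : ℕ) + (l : ℕ) + 1 = n) ↔ l = i.rev := by
    intro l; rw [Fin.ext_iff, Fin.val_rev]
    have := l.isLt; have := i.isLt; constructor <;> omega
  calc (∑ l, QrM n i l * M l j)
      = ∑ l, if l = i.rev then M l j else 0 := by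
        refine Finset.sum_congr rfl fun l _ => ?_
        simp only [QrM]
        rw [if_congr (hcond l) rfl rfl, ite_mul, one_mul, zero_mul]
    _ = M i.rev j := by rw [Finset.sum_ite_eq' Finset.univ]; simp

lemma mul_Qr_apply (n : ℕ) (M : Matrix (Fin n) (Fin n) ℝ) (i j : Fin n) :
    (M * QrM n) i j = M i j.rev := by
  rw [Matrix.mul_apply]
  have hcond : ∀ l : Fin n, ((l : ℕ) + (j : ℕ) + 1 = n) ↔ l = j.rev := by
    intro l; rw [Fin.ext_iff, Fin.val_rev]
    have := l.isLt; have := j.isLt; constructor <;> omega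
  calc (∑ l, M i l * QrM n l j)
      = ∑ l, if l = j.rev then M i l else 0 := by
        refine Finset.sum_congr rfl fun l _ => ?_
        simp only [QrM]
        rw [if_congr (hcond l) rfl rfl, mul_ite, mul_one, mul_zero]
    _ = M i j.rev := by rw [Finset.sum_ite_eq' Finset.univ]; simp

lemma Qr_comm_pow (n k : ℕ) :
    QrM n * (NrM n ^ k) = (NrM n ^ k)ᵀ * QrM n := by
  ext i j
  rw [Qr_mul_apply, mul_Qr_apply, Matrix.transpose_apply, Nr_pow_apply, Nr_pow_apply,
    Fin.val_rev, Fin.val_rev]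
  have := i.isLt; have := j.isLt
  exact if_congr (by omega) rfl rfl

lemma Qr_comm_aeval (n : ℕ) (p : ℝ[X]) :
    QrM n * (Polynomial.aeval (NrM n) p) = (Polynomial.aeval (NrM n) p)ᵀ * QrM n := by
  rw [Polynomial.aeval_eq_sum_range, Finset.mul_sum, Matrix.transpose_sum, Finset.sum_mul]
  refine Finset.sum_congr rfl fun l _ => ?_
  rw [mul_smul_comm, Qr_comm_pow, Matrix.transpose_smul, smul_mul_assoc]

lemma key_poly (m : ℕ) (hm : 0 < m) (μ lam : ℝ) (hμ0 : μ ≠ 0) (hμm : μ ^ m = lam) :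
    ∀ k : ℕ, ∃ p : ℝ[X], p.eval 0 = μ ∧
      (X : ℝ[X]) ^ (k+1) ∣ p ^ m - (C lam + X) := by
  intro k
  induction k with
  | zero =>
    refine ⟨C μ, by simp, ?_⟩
    have h1 : (C μ : ℝ[X]) ^ m - (C lam + X) = -X := by
      rw [← C_pow, hμm]; ring
    rw [h1, zero_add, pow_one]
    exact dvd_neg.mpr dvd_rfl
  | succ k ih =>
    obtain ⟨p, hp0, r, hr⟩ := ih
    set c : ℝ := -(r.eval 0) / (m * μ ^ (m-1)) with hc
    set q : ℝ[X] := p + C c * X ^ (k+1) with hq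
    have hq0 : q.eval 0 = μ := by simp [hq, hp0]
    refine ⟨q, hq0, ?_⟩
    set S : ℝ[X] := ∑ i ∈ Finset.range m, q ^ i * p ^ (m - 1 - i) with hS
    have hgeom : q ^ m - p ^ m = S * (C c * X ^ (k+1)) := by
      have := geom_sum₂_mul q p m
      rw [hS]
      calc q ^ m - p ^ m = (∑ i ∈ Finset.range m, q ^ i * p ^ (m - 1 - i)) * (q - p) := this.symm
        _ = (∑ i ∈ Finset.range m, q ^ i * p ^ (m - 1 - i)) * (C c * X ^ (k+1)) := by
            rw [hq]; ring_nf
    have hkey : q ^ m - (C lam + X) = X ^ (k+1) * (S * C c + r) := by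
      have : q ^ m - (C lam + X) = (q ^ m - p ^ m) + (p ^ m - (C lam + X)) := by ring
      rw [this, hgeom, hr]; ring
    rw [hkey]
    have hSx : X ∣ (S * C c + r) := by
      rw [X_dvd_iff, coeff_zero_eq_eval_zero]
      have hSev : S.eval 0 = m * μ ^ (m-1) := by
        rw [hS, eval_finset_sum]
        have : ∀ i ∈ Finset.range m, (q ^ i * p ^ (m-1-i)).eval 0 = μ ^ (m-1) := by
          intro i hi
          rw [eval_mul, eval_pow, eval_pow, hq0, hp0, ← pow_add]
          congr 1
          have := Finset.mem_range.mp hi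
          omega
        rw [Finset.sum_congr rfl this, Finset.sum_const, Finset.card_range,
          nsmul_eq_mul]
      rw [eval_add, eval_mul, eval_C, hSev, hc]
      have hD : (m : ℝ) * μ ^ (m-1) ≠ 0 := by
        apply mul_ne_zero
        · exact Nat.cast_ne_zero.mpr hm.ne'
        · exact pow_ne_zero _ hμ0
      field_simp
      ring
    calc (X : ℝ[X]) ^ (k+1+1) = X ^ (k+1) * X := by ring
      _ ∣ X ^ (k+1) * (S * C c + r) := mul_dvd_mul_left _ hSx

end Aux

theorem exists_H_selfadjoint_odd_root_negative_block (n m : ℕ) (hm : 0 < m)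
    (hmo : Odd m) (lam : ℝ) (hlam : lam < 0) (ε : ℝ) (hε : ε = 1 ∨ ε = -1) :
    ∃ A : Matrix (Fin n) (Fin n) ℂ,
      ((ε : ℂ) • backQ n) * A = Aᴴ * ((ε : ℂ) • backQ n) ∧
      A ^ m = jordanBlock n (lam : ℂ) := by
  have hml : (0:ℝ) < -lam := neg_pos.mpr hlam
  set t : ℝ := (-lam) ^ ((m:ℝ)⁻¹) with ht_def
  have ht : 0 < t := Real.rpow_pos_of_pos hml _
  have htm : t ^ m = -lam := by
    rw [ht_def, ← Real.rpow_natCast ((-lam) ^ ((m:ℝ)⁻¹)) m, ← Real.rpow_mul hml.le,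
      inv_mul_cancel₀ (Nat.cast_ne_zero.mpr hm.ne' : (m:ℝ) ≠ 0), Real.rpow_one]
  have hμm : (-t) ^ m = lam := by rw [hmo.neg_pow, htm]; ring
  have hμ0 : (-t) ≠ 0 := neg_ne_zero.mpr ht.ne'
  match n with
  | 0 =>
    refine ⟨0, ?_, ?_⟩ <;> · ext i j; exact i.elim0
  | (k+1) =>
    obtain ⟨p, hp0, r, hr⟩ := key_poly m hm (-t) lam hμ0 hμm k
    set f : ℝ →+* ℂ := Complex.ofRealHom with hf
    set Ar : Matrix (Fin (k+1)) (Fin (k+1)) ℝ := Polynomial.aeval (NrM (k+1)) p with hAr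
    refine ⟨Ar.map f, ?_, ?_⟩
    · have hQ : backQ (k+1) = (QrM (k+1)).map f := by
        ext i j
        simp [backQ, QrM, Matrix.map_apply, apply_ite f]
      have hAH : (Ar.map f)ᴴ = Arᵀ.map f := by
        ext i j
        simp [Matrix.conjTranspose_apply, Matrix.map_apply, Matrix.transpose_apply,
          hf, Complex.conj_ofReal]
      rw [hQ, hAH, smul_mul_assoc, mul_smul_comm]
      congr 1
      rw [← Matrix.map_mul, ← Matrix.map_mul, Qr_comm_aeval]
    · have hpow : (Ar.map f) ^ m = (Ar ^ m).map f := by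
        simp only [← RingHom.mapMatrix_apply]
        exact (map_pow f.mapMatrix Ar m).symm
      have hpm : p ^ m = Polynomial.X ^ (k+1) * r + (Polynomial.C lam + Polynomial.X) :=
        sub_eq_iff_eq_add.mp hr
      have hArm : Ar ^ m = algebraMap ℝ (Matrix (Fin (k+1)) (Fin (k+1)) ℝ) lam + NrM (k+1) := by
        rw [hAr, ← map_pow, hpm, map_add, map_add, _root_.map_mul, map_pow,
          Polynomial.aeval_X, Polynomial.aeval_C, Nr_pow_n, zero_mul, zero_add]
      rw [hpow, hArm]
      ext i j
      simp only [Matrix.map_apply, Matrix.add_apply, Matrix.algebraMap_matrix_apply,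
        NrM, jordanBlock, hf]
      by_cases hij : (i : ℕ) = (j : ℕ)
      · have hij' : i = j := Fin.ext hij
        subst hij'
        rw [if_pos rfl, if_pos rfl, if_neg (by omega)]
        simp
      · rw [if_neg (fun h => hij (by rw [h])), if_neg hij]
        by_cases h2 : (i : ℕ) + 1 = (j : ℕ)
        · rw [if_pos h2, if_pos h2]; simp
        · rw [if_neg h2, if_neg h2]; simp
end

section
/- Let λ > 0 real, ε = ±1, B = J_n(λ), H = εQ_n, and m any positive integer. Then there exists an H-selfadjoint matrix A with A^m = B. -/
open Matrix Polynomial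

lemma binom_aux {R : Type*} [CommRing R] (q d : R) (m : ℕ) :
    ∃ s, (q + d) ^ m = q ^ m + (m : R) * q ^ (m - 1) * d + d ^ 2 * s := by
  induction m with
  | zero => exact ⟨0, by simp⟩
  | succ k ih =>
    rcases Nat.eq_zero_or_pos k with hk | hk
    · subst hk; exact ⟨0, by simp⟩
    · obtain ⟨j, rfl⟩ : ∃ j, k = j + 1 := ⟨k - 1, by omega⟩
      obtain ⟨s, hs⟩ := ih
      refine ⟨q * s + d * s + (j + 1 : R) * q ^ j, ?_⟩
      simp only [Nat.add_sub_cancel] at hs ⊢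
      rw [pow_succ, hs]
      push_cast
      ring

lemma hensel (m : ℕ) (hm : 0 < m) (lam : ℝ) (hlam : 0 < lam) (n : ℕ) :
    ∃ q : Polynomial ℝ,
      (X : ℝ[X]) ^ (n + 1) ∣ q ^ m - (C lam + X) ∧ q.eval 0 = lam ^ ((m : ℝ)⁻¹) := by
  have ha : (0:ℝ) < lam ^ ((m : ℝ)⁻¹) := Real.rpow_pos_of_pos hlam _
  have hapow : (lam ^ ((m : ℝ)⁻¹)) ^ m = lam := by
    rw [← Real.rpow_natCast (lam ^ ((m : ℝ)⁻¹)) m, ← Real.rpow_mul hlam.le,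
      inv_mul_cancel₀ (by exact_mod_cast hm.ne' : (m:ℝ) ≠ 0), Real.rpow_one]
  induction n with
  | zero =>
    refine ⟨C (lam ^ ((m : ℝ)⁻¹)), ?_, by simp⟩
    rw [pow_one, ← C_pow, hapow]
    exact ⟨-1, by ring⟩
  | succ n ih =>
    obtain ⟨q, ⟨r, hr⟩, heval⟩ := ih
    set a : ℝ := lam ^ ((m : ℝ)⁻¹) with hadef
    set c : ℝ := - r.eval 0 / (m * a ^ (m - 1)) with hcdef
    have hma : (m : ℝ) * a ^ (m - 1) ≠ 0 :=
      mul_ne_zero (by exact_mod_cast hm.ne') (pow_ne_zero _ ha.ne')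
    obtain ⟨s, hs⟩ := binom_aux q (C c * X ^ (n + 1)) m
    refine ⟨q + C c * X ^ (n + 1), ?_, by simp [heval]⟩
    have key : (q + C c * X ^ (n + 1)) ^ m - (C lam + X)
        = X ^ (n + 1) * ((r + (m : ℝ[X]) * q ^ (m - 1) * C c) + X * ((C c) ^ 2 * X ^ n * s)) := by
      rw [hs]
      linear_combination hr
    rw [key, pow_succ]
    refine mul_dvd_mul_left _ (dvd_add ?_ (Dvd.intro _ rfl))
    rw [X_dvd_iff, coeff_zero_eq_eval_zero]
    simp only [eval_add, eval_mul, eval_natCast, eval_pow, eval_C, heval]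
    rw [hcdef]
    field_simp
    ring

lemma jordan_apply (n : ℕ) (l : ℂ) (i j : Fin n) :
    jordanBlock n l i j = if (i : ℕ) = (j : ℕ) then l else if (i : ℕ) + 1 = (j : ℕ) then 1 else 0 := rfl

lemma backQ_apply (n : ℕ) (i j : Fin n) :
    backQ n i j = if (i : ℕ) + (j : ℕ) + 1 = n then 1 else 0 := rfl

lemma jordan_split (n : ℕ) (l : ℂ) :
    jordanBlock n l = l • (1 : Matrix (Fin n) (Fin n) ℂ) + jordanBlock n 0 := by
  ext i j
  simp only [Matrix.add_apply, Matrix.smul_apply, Matrix.one_apply, jordan_apply, Fin.ext_iff]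
  by_cases h : (i : ℕ) = (j : ℕ) <;> simp [h]

lemma npow_apply (n : ℕ) : ∀ (k : ℕ) (i j : Fin n),
    ((jordanBlock n 0) ^ k) i j = if (i : ℕ) + k = (j : ℕ) then 1 else 0 := by
  intro k
  induction k with
  | zero =>
    intro i j
    simp [Matrix.one_apply, Fin.ext_iff]
  | succ k ih =>
    intro i j
    have hjn := j.isLt
    rw [pow_succ, Matrix.mul_apply]
    simp only [ih, jordan_apply]
    by_cases h : (i : ℕ) + (k + 1) = (j : ℕ)
    · have hik : (i : ℕ) + k < n := by omega
      rw [Finset.sum_eq_single (⟨(i : ℕ) + k, hik⟩ : Fin n)]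
      · simp only [Fin.val_mk]
        split_ifs <;> first | omega | simp
      · intro l _ hl
        have hlv : ¬ ((i : ℕ) + k = (l : ℕ)) := by
          intro hc; exact hl (Fin.ext (by simp [← hc]))
        have hln := l.isLt
        split_ifs <;> first | omega | simp
      · intro h'; exact absurd (Finset.mem_univ _) h'
    · rw [if_neg h]
      refine Finset.sum_eq_zero fun l _ => ?_
      have hln := l.isLt
      split_ifs <;> first | omega | simp

lemma npow_n (n : ℕ) : (jordanBlock n 0) ^ n = 0 := by
  ext i j
  have hjn := j.isLt
  rw [npow_apply, if_neg (by omega)]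
  rfl

lemma QN (n : ℕ) : backQ n * jordanBlock n 0 = (jordanBlock n 0)ᴴ * backQ n := by
  ext i j
  have hin := i.isLt
  have hjn := j.isLt
  rw [Matrix.mul_apply, Matrix.mul_apply]
  simp only [conjTranspose_apply, jordan_apply, backQ_apply]
  by_cases h : (i : ℕ) + (j : ℕ) = n
  · have hj1 : 1 ≤ (j : ℕ) := by omega
    have hi1 : 1 ≤ (i : ℕ) := by omega
    rw [Finset.sum_eq_single (⟨(j : ℕ) - 1, by omega⟩ : Fin n),
      Finset.sum_eq_single (⟨(i : ℕ) - 1, by omega⟩ : Fin n)]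
    · simp only [Fin.val_mk]
      split_ifs <;> first | omega | simp
    · intro l _ hl
      have hlv : (l : ℕ) ≠ (i : ℕ) - 1 := by
        intro hc; exact hl (Fin.ext (by simp [hc]))
      have hln := l.isLt
      split_ifs <;> first | omega | simp
    · intro h'; exact absurd (Finset.mem_univ _) h'
    · intro l _ hl
      have hlv : (l : ℕ) ≠ (j : ℕ) - 1 := by
        intro hc; exact hl (Fin.ext (by simp [hc]))
      have hln := l.isLt
      split_ifs <;> first | omega | simp
    · intro h'; exact absurd (Finset.mem_univ _) h'
  · rw [Finset.sum_eq_zero, Finset.sum_eq_zero]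
    · intro l _
      have hln := l.isLt
      split_ifs <;> first | omega | simp
    · intro l _
      have hln := l.isLt
      split_ifs <;> first | omega | simp

lemma Q_pow (n : ℕ) (k : ℕ) :
    backQ n * (jordanBlock n 0) ^ k = ((jordanBlock n 0)ᴴ) ^ k * backQ n := by
  induction k with
  | zero => simp
  | succ k ih =>
    rw [pow_succ, pow_succ, ← Matrix.mul_assoc, ih, Matrix.mul_assoc, QN,
      ← Matrix.mul_assoc]

lemma Q_aeval (n : ℕ) (q : Polynomial ℝ) :
    backQ n * (Polynomial.aeval (jordanBlock n 0) q) =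
      (Polynomial.aeval (jordanBlock n 0) q)ᴴ * backQ n := by
  set N := jordanBlock n 0 with hN
  rw [Polynomial.aeval_eq_sum_range (p := q) N, conjTranspose_sum, Matrix.mul_sum,
    Finset.sum_mul]
  refine Finset.sum_congr rfl fun k _ => ?_
  rw [Matrix.mul_smul, Matrix.conjTranspose_smul, Matrix.smul_mul,
    Matrix.conjTranspose_pow, Q_pow]
  congr 1

theorem exists_H_selfadjoint_root_positive_block (n m : ℕ) (hm : 0 < m)
    (lam : ℝ) (hlam : 0 < lam) (ε : ℝ) (hε : ε = 1 ∨ ε = -1) :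
    ∃ A : Matrix (Fin n) (Fin n) ℂ,
      ((ε : ℂ) • backQ n) * A = Aᴴ * ((ε : ℂ) • backQ n) ∧
      A ^ m = jordanBlock n (lam : ℂ) := by
  cases n with
  | zero =>
    exact ⟨0, by ext i j; exact i.elim0, by ext i j; exact i.elim0⟩
  | succ n =>
    obtain ⟨q, ⟨r, hr⟩, -⟩ := hensel m hm lam hlam n
    set N := jordanBlock (n + 1) 0 with hN
    refine ⟨Polynomial.aeval N q, ?_, ?_⟩
    · rw [Matrix.smul_mul, Matrix.mul_smul, Q_aeval]
    · rw [← map_pow, show q ^ m = (C lam + X) + X ^ (n + 1) * r by rw [← hr]; ring]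
      rw [map_add, map_add, _root_.map_mul, map_pow, Polynomial.aeval_X, Polynomial.aeval_C,
        show N ^ (n + 1) = 0 from npow_n (n + 1), zero_mul, add_zero, jordan_split]
      congr 1
      rw [Algebra.algebraMap_eq_smul_one]
      ext i j
      simp [Matrix.smul_apply, Complex.real_smul]
end

section
/- If B is an invertible H-selfadjoint complex matrix with no eigenvalues on the negative real axis (−∞, 0], then for every positive integer m there exists an H-selfadjoint matrix A with A^m = B. -/
/-!
The root is sought as `p(B)` for a real polynomial `p`: since `B` is `H`-selfadjoint and `p` has
real coefficients, so is `p(B)`, and `p(B) ^ m = B` as soon as `minpoly ℝ B ∣ p ^ m - X`.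
An irreducible real factor `f` of the minimal polynomial has a complex root `z` off `(-∞, 0]`,
and an `m`-th root of `z` is the value at `z` of a real polynomial `p` (a positive constant if `z`
is real, a linear polynomial otherwise), whence `f ∣ p ^ m - X`. Because `0` is not a root of `f`,
the derivative `m p ^ (m - 1)` is prime to `f`, so Hensel lifting passes to powers of `f`, and the
Chinese remainder theorem glues the coprime factors together.
-/

open Matrix

open Polynomial

section StarAlgebra

variable {R A : Type*} [CommSemiring R] [Semiring A] [Algebra R A]

theorem SemiconjBy.aeval {h x y : A} (hxy : SemiconjBy h x y) (p : R[X]) :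
    SemiconjBy h (aeval x p) (aeval y p) := by
  induction p using Polynomial.induction_on' with
  | add p q hp hq => simpa only [map_add] using hp.add_right hq
  | monomial n r =>
    simp only [aeval_monomial]
    exact SemiconjBy.mul_right (Algebra.commutes r h).symm (hxy.pow_right n)

theorem star_aeval [StarRing R] [TrivialStar R] [StarRing A] [StarModule R A] (x : A) (p : R[X]) :
    star (aeval x p) = aeval (star x) p := by
  induction p using Polynomial.induction_on' with
  | add p q hp hq => simp only [map_add, star_add, hp, hq]
  | monomial n r => simp only [aeval_monomial, ← Algebra.smul_def, star_smul, star_trivial, star_pow]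

end StarAlgebra

theorem mem_spectrum_of_isRoot_minpoly {K A : Type*} [Field K] [Ring A] [Algebra K A] {a : A}
    (ha : IsIntegral K a) {x : K} (hx : (minpoly K a).IsRoot x) : x ∈ spectrum K a := by
  intro hunit
  obtain ⟨g, hg⟩ := dvd_iff_isRoot.2 hx
  have hg0 : g ≠ 0 := by rintro rfl; exact minpoly.ne_zero ha (by rw [hg, mul_zero])
  have hga : aeval a g = 0 := by
    have h := minpoly.aeval K a
    rwa [hg, aeval_mul, map_sub, aeval_X, aeval_C, ← neg_sub, neg_mul,
      neg_eq_zero, hunit.mul_right_eq_zero] at h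
  have hdvd : (X - C x) * g ∣ 1 * g := by rw [← hg, one_mul]; exact minpoly.dvd K a hga
  exact not_isUnit_X_sub_C x (isUnit_of_dvd_one ((mul_dvd_mul_iff_right hg0).mp hdvd))

section Hensel

variable {R : Type*} [CommRing R] {F : R[X]}

theorem exists_mul_dvd_eval_of_isCoprime {x y p q : R} (hxy : IsCoprime x y)
    (hp : x ∣ F.eval p) (hq : y ∣ F.eval q) : ∃ r, x * y ∣ F.eval r := by
  have ⟨u, v, huv⟩ := hxy
  refine ⟨p * v * y + q * u * x, hxy.mul_dvd ?_ ?_⟩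
  · have hr : x ∣ p * v * y + q * u * x - p := ⟨u * (q - p), by linear_combination p * huv⟩
    exact (dvd_sub_left hp).mp (hr.trans (sub_dvd_eval_sub _ _ F))
  · have hr : y ∣ p * v * y + q * u * x - q := ⟨v * (p - q), by linear_combination q * huv⟩
    exact (dvd_sub_left hq).mp (hr.trans (sub_dvd_eval_sub _ _ F))

theorem exists_pow_succ_dvd_eval {f p : R} (hcop : IsCoprime f (F.derivative.eval p))
    (hp : f ∣ F.eval p) (k : ℕ) : ∃ q, f ^ (k + 1) ∣ F.eval q ∧ f ∣ q - p := by
  induction k with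
  | zero => exact ⟨p, by simpa using hp, by simp⟩
  | succ k ih =>
    obtain ⟨q, ⟨w, hw⟩, hqp⟩ := ih
    obtain ⟨z, hz⟩ := hqp.trans (sub_dvd_eval_sub q p F.derivative)
    obtain ⟨u, v, huv⟩ := hcop.add_mul_left_right z
    rw [← hz, add_sub_cancel] at huv
    set c := -(v * w)
    obtain ⟨s, hs⟩ := F.binomExpansion q (f ^ (k + 1) * c)
    refine ⟨q + f ^ (k + 1) * c, ⟨w * u + s * c ^ 2 * f ^ k, ?_⟩, ?_⟩
    · linear_combination hs + hw - f ^ (k + 1) * w * huv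
    · rw [add_sub_right_comm]
      exact dvd_add hqp (dvd_mul_of_dvd_left (dvd_pow_self f k.succ_ne_zero) c)

end Hensel

theorem Irreducible.dvd_of_aeval_eq_zero {K L : Type*} [Field K] [Ring L] [Nontrivial L]
    [Algebra K L] {f g : K[X]} (hf : Irreducible f) {x : L} (hfx : aeval x f = 0)
    (hgx : aeval x g = 0) : f ∣ g :=
  calc f ∣ f * C f.leadingCoeff⁻¹ := dvd_mul_right _ _
    _ = minpoly K x := minpoly.eq_of_irreducible hf hfx
    _ ∣ g := minpoly.dvd K x hgx

section RealPolynomial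

theorem Complex.exists_aeval_eq_of_im_ne_zero {z : ℂ} (hz : z.im ≠ 0) (w : ℂ) :
    ∃ p : ℝ[X], aeval z p = w := by
  refine ⟨C (w.im / z.im) * X + C (w.re - w.im / z.im * z.re), ?_⟩
  apply Complex.ext <;> simp [hz]

theorem Complex.exists_aeval_pow_eq_of_mem_slitPlane {m : ℕ} (hm : m ≠ 0) {z : ℂ}
    (hz : z ∈ Complex.slitPlane) : ∃ p : ℝ[X], aeval z p ^ m = z := by
  by_cases him : z.im = 0
  · have hre : 0 < z.re := by simpa [Complex.mem_slitPlane_iff, him] using hz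
    refine ⟨C (z.re ^ (m⁻¹ : ℝ)), ?_⟩
    rw [aeval_C, Complex.coe_algebraMap, ← Complex.ofReal_pow,
      Real.rpow_inv_natCast_pow hre.le hm]
    exact Complex.ext rfl him.symm
  · obtain ⟨w, hw⟩ := IsAlgClosed.exists_pow_nat_eq z (Nat.pos_of_ne_zero hm)
    obtain ⟨p, hp⟩ := Complex.exists_aeval_eq_of_im_ne_zero him w
    exact ⟨p, hp ▸ hw⟩

variable {m : ℕ} {f : ℝ[X]}

theorem exists_dvd_pow_sub_X_of_irreducible (hm : m ≠ 0) (hf : Irreducible f)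
    (hroots : ∀ x : ℝ, f.IsRoot x → 0 < x) :
    ∃ p : ℝ[X], f ∣ p ^ m - X := by
  obtain ⟨z, hz⟩ := IsAlgClosed.exists_aeval_eq_zero ℂ f (degree_pos_of_irreducible hf).ne'
  have hslit : z ∈ Complex.slitPlane := by
    refine Complex.mem_slitPlane_iff.2 (or_iff_not_imp_right.2 fun him => hroots _ ?_)
    have hz_re : z = (z.re : ℂ) := Complex.ext rfl (by simpa using him)
    rw [hz_re] at hz
    exact RCLike.ofReal_eq_zero.mp ((aeval_ofReal (K := ℂ) f z.re).symm.trans hz)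
  obtain ⟨p, hp⟩ := Complex.exists_aeval_pow_eq_of_mem_slitPlane hm hslit
  exact ⟨p, hf.dvd_of_aeval_eq_zero hz (by simp [hp])⟩

theorem exists_pow_succ_dvd_pow_sub_X_of_prime (hm : m ≠ 0) (hf : Prime f)
    (hroots : ∀ x : ℝ, f.IsRoot x → 0 < x) (k : ℕ) : ∃ p : ℝ[X], f ^ (k + 1) ∣ p ^ m - X := by
  obtain ⟨q, hq⟩ := exists_dvd_pow_sub_X_of_irreducible hm hf.irreducible hroots
  have hfX : ¬ f ∣ X := fun h => (hroots 0 <| by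
    rw [IsRoot.def, ← coeff_zero_eq_eval_zero, ← X_dvd_iff]
    exact (hf.irreducible.associated_of_dvd irreducible_X h).symm.dvd).false
  have hfq : ¬ f ∣ q := fun h => hfX ((dvd_sub_right (dvd_pow h hm)).mp hq)
  have hcop : IsCoprime f ((X ^ m - C X : ℝ[X][X]).derivative.eval q) := by
    rw [derivative_sub, derivative_C, sub_zero, derivative_X_pow, eval_mul, eval_C, eval_pow,
      eval_X, hf.coprime_iff_not_dvd]
    intro h
    rcases hf.dvd_or_dvd h with h | h
    · have hmu : IsUnit (m : ℝ[X]) := by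
        rw [← map_natCast C, isUnit_C]
        exact (Nat.cast_ne_zero.2 hm).isUnit
      exact hf.not_isUnit (isUnit_of_dvd_unit h hmu)
    · exact hfq (hf.dvd_of_dvd_pow h)
  obtain ⟨p, hp, -⟩ := exists_pow_succ_dvd_eval hcop (by simpa using hq) k
  exact ⟨p, by simpa using hp⟩

theorem exists_dvd_pow_sub_X (hm : m ≠ 0) (hroots : ∀ x : ℝ, f.IsRoot x → 0 < x) :
    ∃ p : ℝ[X], f ∣ p ^ m - X := by
  induction f using UniqueFactorizationMonoid.induction_on_coprime with
  | h0 => exact absurd (hroots 0 (by simp)) (lt_irrefl 0)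
  | h1 hu => exact ⟨0, hu.dvd⟩
  | hpr i hf =>
    cases i with
    | zero => exact ⟨0, by simp⟩
    | succ k => exact exists_pow_succ_dvd_pow_sub_X_of_prime hm hf (fun x hx => hroots x <| by
        rw [IsRoot, eval_pow, hx.eq_zero, zero_pow k.succ_ne_zero]) k
  | hcp hxy hx hy =>
    obtain ⟨p, hp⟩ := hx fun r hr => hroots r (root_mul.2 (Or.inl hr))
    obtain ⟨q, hq⟩ := hy fun r hr => hroots r (root_mul.2 (Or.inr hr))
    obtain ⟨r, hr⟩ := exists_mul_dvd_eval_of_isCoprime (F := (X ^ m - C X : ℝ[X][X]))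
      hxy.isCoprime (by simpa using hp) (by simpa using hq)
    exact ⟨r, by simpa using hr⟩

end RealPolynomial

theorem exists_H_selfadjoint_root_no_nonpositive_spectrum_general {n : ℕ} (m : ℕ)
    (hm : 0 < m) (H B : Matrix (Fin n) (Fin n) ℂ)
    (hsa : H * B = Bᴴ * H)
    (hspec : ∀ z ∈ spectrum ℂ B, ¬ ∃ x : ℝ, x ≤ 0 ∧ z = (x : ℂ)) :
    ∃ A : Matrix (Fin n) (Fin n) ℂ, H * A = Aᴴ * H ∧ A ^ m = B := by
  have hroots : ∀ x : ℝ, (minpoly ℝ B).IsRoot x → 0 < x := fun x hx => by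
    by_contra! hx0
    have hxB := mem_spectrum_of_isRoot_minpoly (Algebra.IsIntegral.isIntegral B) hx
    exact hspec x ((spectrum.algebraMap_mem_iff ℂ).2 hxB) ⟨x, hx0, rfl⟩
  obtain ⟨p, hp⟩ := exists_dvd_pow_sub_X hm.ne' hroots
  refine ⟨aeval B p, ?_, ?_⟩
  · rw [← star_eq_conjTranspose, star_aeval]
    exact SemiconjBy.aeval hsa p
  · simpa [sub_eq_zero] using aeval_eq_zero_of_dvd_aeval_eq_zero hp (minpoly.aeval ℝ B)

theorem exists_H_selfadjoint_root_no_nonpositive_spectrum {n : ℕ} (m : ℕ)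
    (hm : 0 < m) (H B : Matrix (Fin n) (Fin n) ℂ)
    (hH : H.IsHermitian) (hHinv : IsUnit H) (hBinv : IsUnit B)
    (hsa : H * B = Bᴴ * H)
    (hspec : ∀ z ∈ spectrum ℂ B, ¬ ∃ x : ℝ, x ≤ 0 ∧ z = (x : ℂ)) :
    ∃ A : Matrix (Fin n) (Fin n) ℂ, H * A = Aᴴ * H ∧ A ^ m = B :=
  exists_H_selfadjoint_root_no_nonpositive_spectrum_general m hm H B hsa hspec
end
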